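/- Let n ≥ 2 and let C be the Cartan matrix of type Aₙ. Define the action of the simple reflection s_i on r = (r₁,…,rₙ) ∈ ℤⁿ by (s_i r)_j = r_j − C_{j i}·r_i, i.e., (s_i r)_i = −r_i, (s_i r)_{i±1} = r_{i±1} + r_i, and (s_i r)_j = r_j otherwise. Let σ = s₁ ∘ s₂ ∘ ⋯ ∘ sₙ and let S = r₁ + ⋯ + rₙ. Then for 1 ≤ i ≤ n, σ^i(r) = (r_{n−i+2}, r_{n−i+3}, …, rₙ, −S, r₁, r₂, …, r_{n−i}), where the entry −S occurs in position i. -/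

import Mathlib

/-!
Adjoin the coordinate `r₀ := -(r₁ + ⋯ + rₙ)`, so that `(r₀, r₁, …, rₙ)` sums to zero. By
induction on `k`, `s₁ ∘ ⋯ ∘ sₖ` sends `x` to `(-(x₁ + ⋯ + xₖ), x₁, …, xₖ₋₁, xₖ₊₁ + xₖ, xₖ₊₂, …)`,
so `σ r = (r₀, r₁, …, rₙ₋₁)`, and the dropped `rₙ` is the new `r₀` because the sum is still zero.
Thus, indexing by `ℤ/(n+1)`, `σ` is the cyclic shift by one place and `σⁱ` the shift by `i`.
-/

open Finset Fin.NatCast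

def cartanA (j i : ℕ) : ℤ := if j = i then 2 else if j + 1 = i ∨ i + 1 = j then -1 else 0

def simpleReflection (i : ℕ) (r : ℕ → ℤ) (j : ℕ) : ℤ := r j - cartanA j i * r i

theorem simpleReflection_apply (i : ℕ) (r : ℕ → ℤ) (j : ℕ) :
    simpleReflection i r j =
      if j = i then -r i else if j + 1 = i ∨ i + 1 = j then r j + r i else r j := by
  unfold simpleReflection cartanA
  split_ifs <;> subst_vars <;> ring

-- `s₁ ∘ s₂ ∘ ⋯ ∘ sₖ`
def coxeterProd (k : ℕ) (x : ℕ → ℤ) : ℕ → ℤ :=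
  (List.range k).foldr (fun i acc => simpleReflection (i + 1) acc) x

theorem coxeterProd_succ (k : ℕ) (x : ℕ → ℤ) :
    coxeterProd (k + 1) x = coxeterProd k (simpleReflection (k + 1) x) := by
  simp [coxeterProd, List.range_succ]

theorem sum_Icc_one_succ {M : Type*} [AddCommMonoid M] (f : ℕ → M) (l : ℕ) :
    ∑ m ∈ Icc 1 (l + 1), f m = f 1 + ∑ m ∈ Icc 1 l, f (m + 1) := by
  rw [← Ico_add_one_right_eq_Icc, sum_eq_sum_Ico_succ_bot (by omega), ← sum_Ico_add' f 1 (l + 1) 1,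
    Ico_add_one_right_eq_Icc]

theorem sum_Icc_simpleReflection_succ (l : ℕ) (x : ℕ → ℤ) :
    ∑ m ∈ Icc 1 (l + 1), simpleReflection (l + 2) x m = ∑ m ∈ Icc 1 (l + 1), x m + x (l + 2) := by
  have hlow : ∀ m ∈ Icc 1 l, simpleReflection (l + 2) x m = x m := by
    intro m hm
    have hml := (mem_Icc.mp hm).2
    rw [simpleReflection_apply, if_neg (by omega), if_neg (by omega)]
  rw [sum_Icc_succ_top (by omega), sum_Icc_succ_top (by omega), sum_congr rfl hlow,
    simpleReflection_apply, if_neg (by omega), if_pos (by omega)]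
  ring

theorem coxeterProd_apply_one (k : ℕ) (x : ℕ → ℤ) :
    coxeterProd (k + 1) x 1 = -∑ m ∈ Icc 1 (k + 1), x m := by
  induction k generalizing x with
  | zero => simp [coxeterProd, simpleReflection_apply]
  | succ k ih =>
    rw [coxeterProd_succ, ih, sum_Icc_simpleReflection_succ, ← sum_Icc_succ_top (by omega)]

theorem coxeterProd_apply_of_two_le (k : ℕ) (x : ℕ → ℤ) {j : ℕ} (hj : 2 ≤ j) :
    coxeterProd k x j =
      if j ≤ k then x (j - 1) else if j = k + 1 then x (k + 1) + x k else x j := by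
  induction k generalizing x with
  | zero => simp [coxeterProd]; omega
  | succ k ih =>
    rw [coxeterProd_succ, ih]
    obtain hjk | rfl | rfl | hjk : j ≤ k ∨ j = k + 1 ∨ j = k + 2 ∨ k + 2 < j := by omega
    · rw [if_pos hjk, if_pos (by omega), simpleReflection_apply, if_neg (by omega),
        if_neg (by omega)]
    · simp [simpleReflection_apply]
    · simp [simpleReflection_apply]
    · rw [if_neg (by omega), if_neg (by omega), if_neg (by omega), if_neg (by omega),
        simpleReflection_apply, if_neg (by omega), if_neg (by omega)]

theorem coxeterProd_self_apply {n j : ℕ} (x : ℕ → ℤ) (hj : 2 ≤ j) (hjn : j ≤ n) :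
    coxeterProd n x j = x (j - 1) := by
  rw [coxeterProd_apply_of_two_le n x hj, if_pos hjn]

theorem sum_Icc_coxeterProd_self (l : ℕ) (x : ℕ → ℤ) :
    ∑ m ∈ Icc 1 (l + 1), coxeterProd (l + 1) x m = -x (l + 1) := by
  have hshift : ∀ m ∈ Icc 1 l, coxeterProd (l + 1) x (m + 1) = x m := fun m hm => by
    rw [coxeterProd_self_apply x (by simp at hm; omega) (by simp at hm; omega), Nat.add_sub_cancel]
  rw [sum_Icc_one_succ, coxeterProd_apply_one, sum_congr rfl hshift, sum_Icc_succ_top (by omega)]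
  abel

def cyclicCoords (n : ℕ) (x : ℕ → ℤ) (j : Fin (n + 1)) : ℤ :=
  if j = 0 then -∑ m ∈ Icc 1 n, x m else x j

theorem cyclicCoords_zero (n : ℕ) (x : ℕ → ℤ) : cyclicCoords n x 0 = -∑ m ∈ Icc 1 n, x m :=
  if_pos rfl

theorem cyclicCoords_of_ne_zero {n : ℕ} (x : ℕ → ℤ) {j : Fin (n + 1)} (hj : j ≠ 0) :
    cyclicCoords n x j = x j :=
  if_neg hj

theorem cyclicCoords_coxeterProd (n : ℕ) (x : ℕ → ℤ) (j : Fin (n + 1)) :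
    cyclicCoords n (coxeterProd n x) j = cyclicCoords n x (j - 1) := by
  rcases n with _ | l
  · obtain rfl := Fin.fin_one_eq_zero j
    rfl
  by_cases hj0 : j = 0
  · have hlast : (0 - 1 : Fin (l + 2)) ≠ 0 := by simp
    rw [hj0, cyclicCoords_zero, sum_Icc_coxeterProd_self, neg_neg, cyclicCoords_of_ne_zero _ hlast,
      Fin.coe_sub_one, if_pos rfl]
  rw [cyclicCoords_of_ne_zero _ hj0]
  by_cases hj1 : (j : ℕ) = 1
  · have hprev : j - 1 = 0 := by rw [sub_eq_zero, Fin.ext_iff, hj1, Fin.val_one]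
    rw [hj1, hprev, coxeterProd_apply_one, cyclicCoords_zero]
  · have hval : ((j - 1 : Fin (l + 2)) : ℕ) = j - 1 := by rw [Fin.coe_sub_one, if_neg hj0]
    have hj2 : 2 ≤ (j : ℕ) := by have := Fin.val_eq_zero_iff.not.mpr hj0; omega
    rw [coxeterProd_self_apply x hj2 (by omega),
      cyclicCoords_of_ne_zero _ (by simp [Fin.ext_iff, hval]; omega), hval]

theorem iterate_precomp_sub {G β : Type*} [AddCommGroup G] (a : G) (i : ℕ) (v : G → β) :
    (fun (w : G → β) (j : G) => w (j - a))^[i] v = fun j => v (j - i • a) := by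
  induction i with
  | zero => simp
  | succ i ih =>
    rw [Function.iterate_succ_apply', ih]
    simp only [succ_nsmul', sub_sub]

theorem cyclicCoords_iterate_coxeterProd (n : ℕ) (x : ℕ → ℤ) (i : ℕ) (j : Fin (n + 1)) :
    cyclicCoords n ((coxeterProd n)^[i] x) j = cyclicCoords n x (j - (i : Fin (n + 1))) := by
  have hsemiconj : Function.Semiconj (cyclicCoords n) (coxeterProd n)
      (fun (w : Fin (n + 1) → ℤ) j => w (j - 1)) :=
    fun x => funext (cyclicCoords_coxeterProd n x)
  rw [hsemiconj.iterate_right i x, iterate_precomp_sub, nsmul_one]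

theorem val_natCast_sub_natCast {n i j : ℕ} (hi : i ≤ n) (hj : j ≤ n) :
    ((j : Fin (n + 1)) - (i : Fin (n + 1))).val = if j < i then n + 1 + j - i else j - i := by
  have hj' : ((j : Fin (n + 1)) : ℕ) = j := Fin.val_cast_of_lt (by omega)
  have hi' : ((i : Fin (n + 1)) : ℕ) = i := Fin.val_cast_of_lt (by omega)
  split_ifs with hji
  · rw [Fin.coe_sub_iff_lt.mpr (by rw [Fin.lt_def, hj', hi']; exact hji), hj', hi']
  · rw [Fin.sub_val_of_le (by rw [Fin.le_def, hj', hi']; omega), hj', hi']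

theorem cyclicCoords_natCast_sub_natCast {n i j : ℕ} (x : ℕ → ℤ) (hi : i ≤ n) (hjn : j ≤ n) :
    cyclicCoords n x ((j : Fin (n + 1)) - i) =
      if j < i then x (n - i + 1 + j) else if j = i then -∑ m ∈ Icc 1 n, x m else x (j - i) := by
  have hval := val_natCast_sub_natCast hi hjn
  split_ifs at hval ⊢ with hji hji'
  · rw [cyclicCoords_of_ne_zero _ (by simp [Fin.ext_iff, hval]; omega), hval]
    congr 1
    omega
  · rw [hji', sub_self, cyclicCoords_zero]
  · rw [cyclicCoords_of_ne_zero _ (by simp [Fin.ext_iff, hval]; omega), hval]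

theorem cyclicCoords_natCast {n j : ℕ} (x : ℕ → ℤ) (hj : 1 ≤ j) (hjn : j ≤ n) :
    cyclicCoords n x (j : Fin (n + 1)) = x j := by
  simpa [Nat.one_le_iff_ne_zero.mp hj] using cyclicCoords_natCast_sub_natCast x n.zero_le hjn

theorem stmt12_general (n : ℕ)
    (C : ℕ → ℕ → ℤ)
    (hC : ∀ j i, C j i = if j = i then 2 else if j + 1 = i ∨ i + 1 = j then -1 else 0)
    (s : ℕ → (ℕ → ℤ) → (ℕ → ℤ))
    (hs : ∀ i r j, s i r j = r j - C j i * r i)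
    (σ : (ℕ → ℤ) → (ℕ → ℤ))
    (hσ : σ = fun r => (List.range n).foldr (fun i acc => s (i + 1) acc) r)
    (r : ℕ → ℤ) (S : ℤ) (hS : S = ∑ m ∈ Finset.Icc 1 n, r m)
    (i : ℕ) (hin : i ≤ n) :
    ∀ j, 1 ≤ j → j ≤ n →
      (σ^[i] r) j = if j < i then r (n - i + 1 + j) else if j = i then -S else r (j - i) := by
  intro j hj hjn
  obtain rfl : C = cartanA := funext₂ hC
  obtain rfl : s = simpleReflection := funext₃ hs
  obtain rfl : σ = coxeterProd n := hσ
  rw [hS, ← cyclicCoords_natCast ((coxeterProd n)^[i] r) hj hjn, cyclicCoords_iterate_coxeterProd,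
    cyclicCoords_natCast_sub_natCast r hin hjn]

/-- For the Cartan matrix `C` of type `Aₙ` and the reflection action
`(sᵢ r)ⱼ = rⱼ − C_{ji}·rᵢ` on `ℤⁿ` (coordinates indexed `1,…,n`), the Coxeter element
`σ = s₁ ∘ s₂ ∘ ⋯ ∘ sₙ` satisfies, for `1 ≤ i ≤ n`,
`σⁱ(r) = (r_{n−i+2}, …, rₙ, −S, r₁, …, r_{n−i})` with `−S = −(r₁+⋯+rₙ)` in position `i`. -/
theorem stmt12 (n : ℕ) (hn : 2 ≤ n)
    (C : ℕ → ℕ → ℤ)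
    (hC : ∀ j i, C j i = if j = i then 2 else if j + 1 = i ∨ i + 1 = j then -1 else 0)
    (s : ℕ → (ℕ → ℤ) → (ℕ → ℤ))
    (hs : ∀ i r j, s i r j = r j - C j i * r i)
    (σ : (ℕ → ℤ) → (ℕ → ℤ))
    (hσ : σ = fun r => (List.range n).foldr (fun i acc => s (i + 1) acc) r)
    (r : ℕ → ℤ) (S : ℤ) (hS : S = ∑ m ∈ Finset.Icc 1 n, r m)
    (i : ℕ) (hi1 : 1 ≤ i) (hin : i ≤ n) :
    ∀ j, 1 ≤ j → j ≤ n →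
      (σ^[i] r) j = if j < i then r (n - i + 1 + j) else if j = i then -S else r (j - i) :=
  stmt12_general n C hC s hs σ hσ r S hS i hin
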